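/- arXiv:1601.00380 — 5 statements merged into one kernel-verified Lean document; each statement's English description precedes it below -/
import Mathlib

section
/- Let U_{m-1} be an (m-1)-dimensional EC-space on [a,b] consisting of continuous functions. Then the space U_m = { c + ∫_a^x g(t) dt : c ∈ ℝ, g ∈ U_{m-1} } is an m-dimensional EC-space on [a,b] containing the constant functions. -/
def VanishesTo (F : ℝ → ℝ) (x : ℝ) (μ : ℕ) : Prop :=
  ∀ r < μ, iteratedDeriv r F x = 0

def AtMostZeros (m : ℕ) (I : Set ℝ) (F : ℝ → ℝ) : Prop :=
  ∀ (h : ℕ) (τ : Fin h → ℝ) (μ : Fin h → ℕ),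
    Function.Injective τ → (∀ j, τ j ∈ I) → (∀ j, 1 ≤ μ j ∧ μ j ≤ m) →
    (∑ j, μ j) = m → ¬ (∀ j, VanishesTo F (τ j) (μ j))

lemma atMostZeros_general {m : ℕ} {I : Set ℝ} {F : ℝ → ℝ}
    (hF : AtMostZeros m I F) (ι : Type) [Fintype ι]
    (τ : ι → ℝ) (μ : ι → ℕ) (hinj : Function.Injective τ)
    (hmem : ∀ j, τ j ∈ I) (hle : ∀ j, μ j ≤ m) (hsum : ∑ j, μ j = m)
    (hvan : ∀ j, VanishesTo F (τ j) (μ j)) : False := by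
  classical
  set s : Finset ι := Finset.univ.filter (fun j => 1 ≤ μ j) with hs
  let e : Fin s.card ≃ s := s.equivFin.symm
  refine hF s.card (fun k => τ (e k)) (fun k => μ (e k)) ?_ (fun k => hmem _) ?_ ?_
    (fun k => hvan _)
  · exact hinj.comp (Subtype.val_injective.comp e.injective)
  · intro k
    refine ⟨?_, hle _⟩
    have := (e k).2
    simp only [hs, Finset.mem_filter] at this
    exact this.2
  · have h1 : ∑ k : Fin s.card, μ (e k) = ∑ j ∈ s, μ j := by
      rw [← Finset.sum_attach s (fun j => μ j)]
      exact Fintype.sum_equiv e _ _ (fun k => rfl)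
    rw [h1, ← hsum]
    refine Finset.sum_subset (Finset.subset_univ s) ?_
    intro j _ hj
    have : ¬ 1 ≤ μ j := fun h1 => hj (by simp [hs, Finset.mem_filter, h1])
    omega

lemma key {m : ℕ} (hm : 2 ≤ m) {a b : ℝ} {g : ℝ → ℝ} (hg : Continuous g)
    (hgz : g ≠ 0 → AtMostZeros (m-1) (Set.Icc a b) g) (c : ℝ)
    (hGne : (fun x => c + ∫ t in a..x, g t) ≠ 0) :
    AtMostZeros m (Set.Icc a b) (fun x => c + ∫ t in a..x, g t) := by
  classical
  intro h τ μ hinj hmem hbnd hsum hvan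
  set G : ℝ → ℝ := fun x => c + ∫ t in a..x, g t with hGdef
  have HG : ∀ x, HasDerivAt G (g x) x := fun x =>
    ((hg.integral_hasStrictDerivAt a x).hasDerivAt).const_add c
  have hGdiff : Differentiable ℝ G := fun x => (HG x).differentiableAt
  have hGc : Continuous G := hGdiff.continuous
  have hderivG : deriv G = g := funext fun x => (HG x).deriv
  have hpos : 0 < h := by
    by_contra hc
    have : h = 0 := by omega
    subst this
    simp at hsum
    omega
  have hG0 : ∀ j, G (τ j) = 0 := fun j => by
    have := hvan j 0 (by have := (hbnd j).1; omega)
    simpa [iteratedDeriv_zero] using this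
  by_cases hg0 : g = 0
  · have hGconst : G = fun _ => c := by
      funext x; simp [hGdef, hg0]
    have hc0 : c = 0 := by
      have := hG0 ⟨0, hpos⟩
      rw [hGconst] at this
      exact this
    exact hGne (by rw [hGconst, hc0]; rfl)
  · set σ := Tuple.sort τ with hσdef
    set t : Fin h → ℝ := τ ∘ σ with htdef
    have hmono : StrictMono t :=
      (Tuple.monotone_sort τ).strictMono_of_injective (hinj.comp σ.injective)
    have hhm : h ≤ m := by
      calc h = ∑ _j : Fin h, 1 := by simp
        _ ≤ ∑ j, μ j := Finset.sum_le_sum (fun j _ => (hbnd j).1)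
        _ = m := hsum
    have hrolle : ∀ i : Fin (h-1), ∃ x ∈ Set.Ioo (t ⟨i.1, by omega⟩) (t ⟨i.1+1, by omega⟩),
        deriv G x = 0 := by
      intro i
      refine exists_deriv_eq_zero ?_ hGc.continuousOn ?_
      · exact hmono (by simp [Fin.lt_def])
      · rw [show t ⟨i.1, by omega⟩ = τ (σ ⟨i.1, by omega⟩) from rfl,
          show t ⟨i.1+1, by omega⟩ = τ (σ ⟨i.1+1, by omega⟩) from rfl, hG0, hG0]
    choose ρ hρ hρ0 using hrolle
    refine atMostZeros_general (hgz hg0) (Fin h ⊕ Fin (h-1))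
      (Sum.elim t ρ) (Sum.elim (fun j => μ (σ j) - 1) (fun _ => 1)) ?_ ?_ ?_ ?_ ?_
    · -- injective
      have hlt : ∀ (j : Fin h) (i : Fin (h-1)), t j ≠ ρ i := by
        intro j i heq
        rcases le_or_gt j.1 i.1 with hji | hji
        · have : t j ≤ t ⟨i.1, by omega⟩ := hmono.monotone (by simp [Fin.le_def]; omega)
          have := (hρ i).1
          linarith [this]
        · have : t ⟨i.1+1, by omega⟩ ≤ t j := hmono.monotone (by simp [Fin.le_def]; omega)
          have := (hρ i).2
          linarith [this]
      rintro (j | i) (j' | i') hxy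
      · exact congrArg Sum.inl (hmono.injective hxy)
      · exact absurd hxy (hlt j i')
      · exact absurd hxy.symm (hlt j' i)
      · rcases lt_trichotomy i.1 i'.1 with hii | hii | hii
        · exfalso
          have h1 := (hρ i).2
          have h2 := (hρ i').1
          have : t ⟨i.1+1, by omega⟩ ≤ t ⟨i'.1, by omega⟩ :=
            hmono.monotone (by simp [Fin.le_def]; omega)
          simp only [Sum.elim_inr] at hxy
          linarith
        · exact congrArg Sum.inr (Fin.ext hii)
        · exfalso
          have h1 := (hρ i').2
          have h2 := (hρ i).1
          have : t ⟨i'.1+1, by omega⟩ ≤ t ⟨i.1, by omega⟩ :=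
            hmono.monotone (by simp [Fin.le_def]; omega)
          simp only [Sum.elim_inr] at hxy
          linarith
    · rintro (j | i)
      · exact hmem (σ j)
      · have h1 := (hρ i).1
        have h2 := (hρ i).2
        have m1 := hmem (σ ⟨i.1, by omega⟩)
        have m2 := hmem (σ ⟨i.1+1, by omega⟩)
        rw [Set.mem_Icc] at m1 m2 ⊢
        constructor
        · calc a ≤ t ⟨i.1, by omega⟩ := m1.1
            _ ≤ ρ i := le_of_lt h1
        · calc ρ i ≤ t ⟨i.1+1, by omega⟩ := le_of_lt h2
            _ ≤ b := m2.2
    · rintro (j | i)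
      · have := (hbnd (σ j)).2; simp; omega
      · simp; omega
    · have e1 : ∑ j : Fin h, μ (σ j) = m := by
        rw [← hsum]
        exact Equiv.sum_comp σ μ
      have e2 : ∑ j : Fin h, (μ (σ j) - 1 + 1) = m := by
        rw [← e1]
        exact Finset.sum_congr rfl (fun j _ => Nat.sub_add_cancel (hbnd (σ j)).1)
      rw [Finset.sum_add_distrib] at e2
      simp only [Finset.sum_const, Finset.card_univ, Fintype.card_fin, smul_eq_mul,
        mul_one] at e2
      rw [Fintype.sum_sum_type]
      simp only [Sum.elim_inl, Sum.elim_inr, Finset.sum_const, Finset.card_univ,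
        Fintype.card_fin, smul_eq_mul, mul_one]
      omega
    · rintro (j | i) r hr
      · simp only [Sum.elim_inl] at hr ⊢
        rw [← hderivG, ← iteratedDeriv_succ']
        exact hvan (σ j) (r+1) (by omega)
      · simp only [Sum.elim_inr] at hr ⊢
        have : r = 0 := by omega
        subst this
        rw [iteratedDeriv_zero, ← hderivG]
        exact hρ0 i

theorem stmt_2 (m : ℕ) (hm : 2 ≤ m) (a b : ℝ) (hab : a < b)
    (U V : Submodule ℝ (ℝ → ℝ))
    (hdim : Module.finrank ℝ U = m - 1)
    (hcont : ∀ g ∈ U, Continuous g)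
    (hsm : ∀ g ∈ U, ContDiff ℝ (m - 2 : ℕ) g)
    (hEC : ∀ g ∈ U, g ≠ 0 → AtMostZeros (m - 1) (Set.Icc a b) g)
    (hV : ∀ G, G ∈ V ↔ ∃ c : ℝ, ∃ g ∈ U, G = fun x => c + ∫ t in a..x, g t) :
    Module.finrank ℝ V = m ∧ (fun _ => (1 : ℝ)) ∈ V ∧
      ∀ G ∈ V, ContDiff ℝ (m - 1 : ℕ) G ∧ (G ≠ 0 → AtMostZeros m (Set.Icc a b) G) := by
  have hU_fd : FiniteDimensional ℝ U := by
    apply FiniteDimensional.of_finrank_pos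
    rw [hdim]; omega
  let L : (ℝ × U) →ₗ[ℝ] (ℝ → ℝ) :=
    { toFun := fun p => fun x => p.1 + ∫ t in a..x, (p.2 : ℝ → ℝ) t
      map_add' := by
        intro p q
        funext x
        have h1 : IntervalIntegrable (p.2 : ℝ → ℝ) MeasureTheory.volume a x :=
          (hcont _ p.2.2).intervalIntegrable a x
        have h2 : IntervalIntegrable (q.2 : ℝ → ℝ) MeasureTheory.volume a x :=
          (hcont _ q.2.2).intervalIntegrable a x
        simp only [Prod.fst_add, Prod.snd_add, Submodule.coe_add, Pi.add_apply]
        rw [intervalIntegral.integral_add h1 h2]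
        ring
      map_smul' := by
        intro r p
        funext x
        simp only [Prod.smul_fst, Prod.smul_snd, Submodule.coe_smul, Pi.smul_apply,
          smul_eq_mul, RingHom.id_apply]
        rw [intervalIntegral.integral_const_mul]
        ring }
  have hVrange : V = LinearMap.range L := by
    ext G
    rw [hV, LinearMap.mem_range]
    constructor
    · rintro ⟨c, g, hg, hG⟩
      exact ⟨(c, ⟨g, hg⟩), hG.symm⟩
    · rintro ⟨p, hp⟩
      exact ⟨p.1, p.2, p.2.2, hp.symm⟩
  have hLinj : Function.Injective L := by
    rw [← LinearMap.ker_eq_bot, LinearMap.ker_eq_bot']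
    intro p hp
    have hp' : ∀ x, p.1 + ∫ t in a..x, (p.2 : ℝ → ℝ) t = 0 := fun x => congrFun hp x
    have hc0 : p.1 = 0 := by
      have := hp' a
      simpa [intervalIntegral.integral_same] using this
    have hg0 : (p.2 : ℝ → ℝ) = 0 := by
      funext x
      have HG : ∀ y, HasDerivAt (fun x => p.1 + ∫ t in a..x, (p.2 : ℝ → ℝ) t)
          ((p.2 : ℝ → ℝ) y) y := fun y =>
        (((hcont _ p.2.2).integral_hasStrictDerivAt a y).hasDerivAt).const_add p.1
      have h1 := (HG x).deriv
      have h2 : (fun x => p.1 + ∫ t in a..x, (p.2 : ℝ → ℝ) t) = (fun _ => (0:ℝ)) := hp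
      rw [h2] at h1
      simp at h1
      simp [← h1]
    have : p.2 = 0 := Subtype.ext hg0
    exact Prod.ext hc0 this
  refine ⟨?_, ?_, ?_⟩
  · rw [hVrange, LinearMap.finrank_range_of_inj hLinj]
    rw [Module.finrank_prod, hdim, Module.finrank_self]
    omega
  · rw [hV]
    refine ⟨1, 0, U.zero_mem, ?_⟩
    funext x
    simp
  · intro G hG
    rw [hV] at hG
    obtain ⟨c, g, hg, rfl⟩ := hG
    have hgC : Continuous g := hcont g hg
    constructor
    · rw [show m-1 = (m-2)+1 from by omega, Nat.cast_add, Nat.cast_one,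
        contDiff_succ_iff_deriv]
      have HG : ∀ y, HasDerivAt (fun x => c + ∫ t in a..x, g t) (g y) y := fun y =>
        ((hgC.integral_hasStrictDerivAt a y).hasDerivAt).const_add c
      have hderivG : deriv (fun x => c + ∫ t in a..x, g t) = g :=
        funext fun y => (HG y).deriv
      refine ⟨fun y => (HG y).differentiableAt, ?_⟩
      rw [hderivG]
      exact ⟨by simp, hsm g hg⟩
    · intro hGne
      exact key hm hgC (hEC g hg) c hGne
end

section
/- Let w₀,...,w_{m-1} be a system of weight functions on [a,b] (w_j positive and C^{m-1-j}), with associated generalized derivatives L₀F = F/w₀ and L_jF = (1/w_j) D(L_{j-1}F) for j = 1,...,m-1. Then the set of C^{m-1} functions F on [a,b] with L_{m-1}F constant is an m-dimensional vector space, and every nonzero element of it has at most m-1 zeros in [a,b] counted with multiplicities up to m. -/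
/-!
Everything is an induction on the number of weights along the identity
`L_{j+1}^{(w₀, w₁, …)} F = L_j^{(w₁, …)} (D (F / w₀))`.

Zeros: dividing by `w₀ > 0` keeps the zeros of `F` and their multiplicities, and Rolle's theorem
between consecutive distinct zeros gives `D (F / w₀)` a zero count smaller by at most one. By
induction `D (F / w₀)` vanishes on `[a, b]`, so `F / w₀` is constant there, and zero since it has
a zero.

Dimension: the same induction shows that a solution of `L_{m-1} F = const` with
`L_j F (p) = 0` for all `j < m` vanishes on `[a, b]`. The iterated integrals
`u_i = w₀ ∫_p w₁ ∫_p ⋯ ∫_p w_i` satisfy `L_j u_i (p) = δᵢⱼ`; for `p` interior to `[a, b]` their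
restrictions are therefore independent and, by uniqueness, span the space.
-/

open Set

/-- Generalized derivatives associated with a system of weight functions:
`genDeriv w 0 F = F / w₀`, `genDeriv w (j+1) F = (D (genDeriv w j F)) / w_{j+1}`. -/
noncomputable def genDeriv (w : ℕ → ℝ → ℝ) : ℕ → (ℝ → ℝ) → (ℝ → ℝ)
  | 0 => fun F x => F x / w 0 x
  | (j + 1) => fun F x => deriv (genDeriv w j F) x / w (j + 1) x


namespace VanishesTo

variable {f g : ℝ → ℝ} {x : ℝ} {μ ν : ℕ}

theorem mono (h : VanishesTo f x μ) (hνμ : ν ≤ μ) : VanishesTo f x ν :=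
  fun r hr => h r (hr.trans_le hνμ)

theorem deriv (h : VanishesTo f x (μ + 1)) : VanishesTo (deriv f) x μ := fun r hr => by
  simpa only [iteratedDeriv_succ'] using h (r + 1) (by omega)

theorem mul {n : ℕ} (hf : ContDiffAt ℝ n f x) (hg : ContDiffAt ℝ n g x) (hμ : μ ≤ n + 1)
    (h : VanishesTo f x μ) : VanishesTo (f * g) x μ := fun r hr => by
  have hrn : (r : WithTop ℕ∞) ≤ n := by exact_mod_cast (by omega : r ≤ n)
  rw [iteratedDeriv_mul (hf.of_le hrn) (hg.of_le hrn)]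
  refine Finset.sum_eq_zero fun i hi => ?_
  rw [h i (by simp at hi; omega), mul_zero, zero_mul]

end VanishesTo

def VanishesOn (F : ℝ → ℝ) (Z : Multiset ℝ) : Prop :=
  ∀ x ∈ Z, VanishesTo F x (Z.count x)

namespace VanishesOn

variable {F : ℝ → ℝ} {Z : Multiset ℝ}

theorem mono {Z₀ : Multiset ℝ} (h : VanishesOn F Z) (hZ₀ : Z₀ ≤ Z) : VanishesOn F Z₀ :=
  fun x hx => (h x (Multiset.mem_of_le hZ₀ hx)).mono (Multiset.count_le_of_le x hZ₀)

theorem apply_eq_zero (h : VanishesOn F Z) {x : ℝ} (hx : x ∈ Z) : F x = 0 := by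
  simpa using h x hx 0 (Multiset.count_pos.mpr hx)

end VanishesOn

theorem Multiset.exists_le_card_eq {α : Type*} {s : Multiset α} {n : ℕ} (hn : n ≤ card s) :
    ∃ t ≤ s, card t = n := by
  obtain ⟨t, ht⟩ := card_pos_iff_exists_mem.mp
    (by rw [card_powersetCard]; exact Nat.choose_pos hn : 0 < card (powersetCard n s))
  exact ⟨t, (mem_powersetCard.mp ht).1, (mem_powersetCard.mp ht).2⟩

theorem exists_finset_deriv_eq_zero {H : ℝ → ℝ} {a b : ℝ} (hH : ContinuousOn H (Icc a b))
    {s : Finset ℝ} (hs : ↑s ⊆ Icc a b) (hzero : ∀ x ∈ s, H x = 0) :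
    ∃ t : Finset ℝ, (∀ z ∈ t, z ∈ Icc a b ∧ deriv H z = 0) ∧ s.card ≤ (t \ s).card + 1 := by
  classical
  have hrolle : ∀ x ∈ s, ∀ y ∈ s, x < y → ∃ z ∈ Ioo x y, deriv H z = 0 := fun x hx y hy hxy =>
    exists_deriv_eq_zero hxy (hH.mono (Icc_subset_Icc (hs hx).1 (hs hy).2))
      ((hzero x hx).trans (hzero y hy).symm)
  choose! ρ hρ using hrolle
  refine ⟨((s ×ˢ s).filter fun q => q.1 < q.2).image fun q => ρ q.1 q.2, ?_, ?_⟩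
  · simp only [Finset.mem_image, Finset.mem_filter, Finset.mem_product]
    rintro z ⟨⟨x, y⟩, ⟨⟨hx, hy⟩, hxy⟩, rfl⟩
    obtain ⟨hmem, hz⟩ := hρ x hx y hy hxy
    exact ⟨⟨(hs hx).1.trans hmem.1.le, hmem.2.le.trans (hs hy).2⟩, hz⟩
  · exact Finset.card_le_sdiff_of_interleaved fun x hx y hy hxy _ =>
      ⟨ρ x y, Finset.mem_image.mpr ⟨(x, y), by simp [hx, hy, hxy], rfl⟩, (hρ x hx y hy hxy).1⟩

theorem VanishesOn.exists_deriv {H : ℝ → ℝ} {a b : ℝ} (hH : ContinuousOn H (Icc a b))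
    {Z : Multiset ℝ} (hZ : ∀ x ∈ Z, x ∈ Icc a b) (hv : VanishesOn H Z) :
    ∃ Z' : Multiset ℝ, (∀ x ∈ Z', x ∈ Icc a b) ∧ Multiset.card Z' = Multiset.card Z - 1 ∧
      VanishesOn (deriv H) Z' := by
  classical
  obtain ⟨t, ht, hcard⟩ := exists_finset_deriv_eq_zero hH (s := Z.toFinset)
    (fun x hx => hZ x (Multiset.mem_toFinset.mp hx))
    fun x hx => hv.apply_eq_zero (Multiset.mem_toFinset.mp hx)
  -- Each zero of `H` of multiplicity `μ` is a zero of `deriv H` of multiplicity `μ - 1`, and the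
  -- new zeros `t \ Z.toFinset` make up for the distinct zeros of `H`, all but one.
  set Z'' := (Z - Z.dedup) + (t \ Z.toFinset).val
  have hZ'' : ∀ x ∈ Z'', x ∈ Icc a b := fun z hz => by
    rcases Multiset.mem_add.mp hz with hz | hz
    · exact hZ z (Multiset.mem_of_le (Multiset.sub_le_self _ _) hz)
    · exact (ht z (Finset.mem_sdiff.mp hz).1).1
  have hcard'' : Multiset.card Z - 1 ≤ Multiset.card Z'' := by
    have := Multiset.card_le_card (Multiset.dedup_le Z)
    rw [Multiset.card_add, Multiset.card_sub (Multiset.dedup_le Z), Finset.card_val,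
      ← Multiset.card_toFinset]
    omega
  have hv'' : VanishesOn (deriv H) Z'' := fun z hz => by
    rw [Multiset.count_add, Multiset.count_sub, Multiset.count_dedup]
    by_cases hzZ : z ∈ Z
    · have hzt : z ∉ (t \ Z.toFinset).val := fun h =>
        (Finset.mem_sdiff.mp h).2 (Multiset.mem_toFinset.mpr hzZ)
      rw [if_pos hzZ, Multiset.count_eq_zero.mpr hzt, add_zero]
      apply VanishesTo.deriv
      rw [Nat.sub_add_cancel (Multiset.count_pos.mpr hzZ)]
      exact hv z hzZ
    · have hzt : z ∈ t \ Z.toFinset := (Multiset.mem_add.mp hz).resolve_left fun h =>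
        hzZ (Multiset.mem_of_le (Multiset.sub_le_self _ _) h)
      rw [if_neg hzZ, Multiset.count_eq_zero.mpr hzZ,
        Multiset.count_eq_one_of_mem (t \ Z.toFinset).nodup hzt]
      intro r hr
      obtain rfl : r = 0 := by omega
      simpa using (ht z (Finset.mem_sdiff.mp hzt).1).2
  obtain ⟨Z', hle, hcard'⟩ := Multiset.exists_le_card_eq hcard''
  exact ⟨Z', fun x hx => hZ'' x (Multiset.mem_of_le hle hx), hcard', hv''.mono hle⟩

theorem atMostZeros_of_forall_multiset {m : ℕ} {I : Set ℝ} {F : ℝ → ℝ}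
    (h : ∀ Z : Multiset ℝ, (∀ x ∈ Z, x ∈ I) → Multiset.card Z = m → ¬ VanishesOn F Z) :
    AtMostZeros m I F := by
  classical
  intro k τ μ hτ hτI _ hμ hv
  refine h (∑ j, Multiset.replicate (μ j) (τ j)) (fun x hx => ?_) (by simpa using hμ)
    fun x hx => ?_
  · obtain ⟨j, -, hj⟩ := Multiset.mem_sum.mp hx
    exact Multiset.eq_of_mem_replicate hj ▸ hτI j
  · obtain ⟨j, -, hj⟩ := Multiset.mem_sum.mp hx
    obtain rfl := Multiset.eq_of_mem_replicate hj
    rw [Multiset.count_sum', Finset.sum_eq_single j]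
    · simpa using hv j
    · intro i _ hij
      simp [Multiset.count_replicate, hτ.ne hij]
    · simp

theorem contDiff_integral {u : ℝ → ℝ} {k : ℕ} (hu : ContDiff ℝ k u) (p : ℝ) :
    ContDiff ℝ (k + 1 : ℕ) fun x => ∫ t in p..x, u t := by
  rw [Nat.cast_add_one, contDiff_succ_iff_deriv, funext (hu.continuous.deriv_integral u p)]
  exact ⟨fun x => (hu.continuous.integral_hasStrictDerivAt p x).hasDerivAt.differentiableAt,
    by simp, hu⟩

theorem genDeriv_zero_fun (w : ℕ → ℝ → ℝ) (j : ℕ) : genDeriv w j 0 = 0 := by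
  induction j with
  | zero => funext x; simp [genDeriv]
  | succ j ih => funext x; simp [genDeriv, ih]

theorem genDeriv_shift (w : ℕ → ℝ → ℝ) (F : ℝ → ℝ) (j : ℕ) :
    genDeriv (fun k => w (k + 1)) j (deriv (genDeriv w 0 F)) = genDeriv w (j + 1) F := by
  induction j with
  | zero => rfl
  | succ j ih =>
    change (fun x => deriv (genDeriv (fun k => w (k + 1)) j (deriv (genDeriv w 0 F))) x /
      w (j + 2) x) = _
    rw [ih]
    rfl

theorem genDeriv_zero_eq_zero_iff {w : ℕ → ℝ → ℝ} {F : ℝ → ℝ} {x : ℝ} (hw : w 0 x ≠ 0) :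
    genDeriv w 0 F x = 0 ↔ F x = 0 := by
  simp [genDeriv, hw]

theorem Set.EqOn.genDeriv {w : ℕ → ℝ → ℝ} {F G : ℝ → ℝ} {s : Set ℝ} (h : EqOn F G s)
    (hs : IsOpen s) (j : ℕ) : EqOn (genDeriv w j F) (genDeriv w j G) s := by
  induction j with
  | zero => intro x hx; simp only [_root_.genDeriv, h hx]
  | succ j ih => intro x hx; simp only [_root_.genDeriv, ih.deriv hs hx]

section BasisConstruction

variable {U : Set ℝ} {w : ℕ → ℝ → ℝ}

theorem genDeriv_weight_zero (hU : IsOpen U) (hw₀ : ∀ x ∈ U, w 0 x ≠ 0) (j : ℕ) :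
    EqOn (genDeriv w j (w 0)) (fun _ => if j = 0 then 1 else 0) U := by
  induction j with
  | zero => intro x hx; simp [genDeriv, hw₀ x hx]
  | succ j ih => intro x hx; simp [genDeriv, ih.deriv hU hx]

theorem genDeriv_succ_mul_integral (hU : IsOpen U) (hw₀ : ∀ x ∈ U, w 0 x ≠ 0) {u : ℝ → ℝ}
    (hu : Continuous u) (p : ℝ) (j : ℕ) :
    EqOn (genDeriv w (j + 1) fun x => w 0 x * ∫ t in p..x, u t)
      (genDeriv (fun k => w (k + 1)) j u) U := by
  rw [← genDeriv_shift]
  refine EqOn.genDeriv (fun x hx => ?_) hU j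
  have h : EqOn (genDeriv w 0 fun x => w 0 x * ∫ t in p..x, u t) (fun x => ∫ t in p..x, u t) U :=
    fun y hy => mul_div_cancel_left₀ _ (hw₀ y hy)
  rw [h.deriv hU hx, hu.deriv_integral]

end BasisConstruction

structure IsWeightSystem (n : ℕ) (U : Set ℝ) (w : ℕ → ℝ → ℝ) : Prop where
  contDiff : ∀ j ≤ n, ContDiff ℝ (n - j : ℕ) (w j)
  ne_zero : ∀ j ≤ n, ∀ x ∈ U, w j x ≠ 0

namespace IsWeightSystem

variable {n : ℕ} {U : Set ℝ} {w : ℕ → ℝ → ℝ} {F G : ℝ → ℝ} {a b x₀ : ℝ}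

theorem shift (hw : IsWeightSystem (n + 1) U w) : IsWeightSystem n U fun k => w (k + 1) where
  contDiff j hj := by simpa using hw.contDiff (j + 1) (by omega)
  ne_zero j hj := hw.ne_zero (j + 1) (by omega)

theorem contDiffOn_genDeriv (hw : IsWeightSystem n U w) (hU : IsOpen U)
    (hF : ContDiffOn ℝ n F U) {j : ℕ} (hj : j ≤ n) :
    ContDiffOn ℝ (n - j : ℕ) (genDeriv w j F) U := by
  induction j with
  | zero => exact hF.div (hw.contDiff 0 hj).contDiffOn (hw.ne_zero 0 hj)
  | succ j ih =>
    refine ContDiffOn.div ?_ (hw.contDiff (j + 1) hj).contDiffOn (hw.ne_zero (j + 1) hj)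
    exact (ih (by omega)).deriv_of_isOpen hU (by norm_cast; omega)

theorem differentiableAt_genDeriv (hw : IsWeightSystem n U w) (hU : IsOpen U)
    (hF : ContDiffOn ℝ n F U) {j : ℕ} (hj : j < n) {x : ℝ} (hx : x ∈ U) :
    DifferentiableAt ℝ (genDeriv w j F) x :=
  ((hw.contDiffOn_genDeriv hU hF hj.le).differentiableOn (by norm_cast; omega)).differentiableAt
    (hU.mem_nhds hx)

theorem contDiffOn_deriv_genDeriv_zero (hw : IsWeightSystem (n + 1) U w) (hU : IsOpen U)
    (hF : ContDiffOn ℝ (n + 1 : ℕ) F U) : ContDiffOn ℝ n (deriv (genDeriv w 0 F)) U :=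
  (hw.contDiffOn_genDeriv hU hF (Nat.zero_le _)).deriv_of_isOpen hU (by norm_cast)

theorem genDeriv_add (hw : IsWeightSystem n U w) (hU : IsOpen U) (hF : ContDiffOn ℝ n F U)
    (hG : ContDiffOn ℝ n G U) {j : ℕ} (hj : j ≤ n) :
    EqOn (genDeriv w j (F + G)) (genDeriv w j F + genDeriv w j G) U := by
  induction j with
  | zero => intro x _; simp [genDeriv, add_div]
  | succ j ih =>
    intro x hx
    simp only [genDeriv, Pi.add_apply, (ih (by omega)).deriv hU hx, ← add_div]
    rw [deriv_add (hw.differentiableAt_genDeriv hU hF hj hx)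
      (hw.differentiableAt_genDeriv hU hG hj hx)]

theorem genDeriv_const_smul (hw : IsWeightSystem n U w) (hU : IsOpen U)
    (hF : ContDiffOn ℝ n F U) (c : ℝ) {j : ℕ} (hj : j ≤ n) :
    EqOn (genDeriv w j (c • F)) (c • genDeriv w j F) U := by
  induction j with
  | zero => intro x _; simp [genDeriv, mul_div_assoc]
  | succ j ih =>
    intro x hx
    simp only [genDeriv, Pi.smul_apply, (ih (by omega)).deriv hU hx, smul_eq_mul, mul_div_assoc,
      deriv_const_smul c (hw.differentiableAt_genDeriv hU hF hj hx)]

theorem genDeriv_sum (hw : IsWeightSystem n U w) (hU : IsOpen U) {ι : Type*} (s : Finset ι)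
    (c : ι → ℝ) {u : ι → ℝ → ℝ} (hu : ∀ i ∈ s, ContDiffOn ℝ n (u i) U) {j : ℕ} (hj : j ≤ n) :
    EqOn (genDeriv w j (∑ i ∈ s, c i • u i)) (∑ i ∈ s, c i • genDeriv w j (u i)) U := by
  classical
  induction s using Finset.induction_on with
  | empty => simp [genDeriv_zero_fun, EqOn]
  | insert i s hi ih =>
    intro x hx
    have hs : ContDiffOn ℝ n (∑ k ∈ s, c k • u k) U := by
      simpa only [Finset.sum_fn, Pi.smul_apply] using
        ContDiffOn.sum fun k hk => (hu k (Finset.mem_insert_of_mem hk)).const_smul (c k)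
    have hui := hu i (Finset.mem_insert_self i s)
    have hcui : ContDiffOn ℝ n (c i • u i) U := hui.const_smul (c i)
    rw [Finset.sum_insert hi, Finset.sum_insert hi, hw.genDeriv_add hU hcui hs hj hx,
      Pi.add_apply, hw.genDeriv_const_smul hU hui _ hj hx,
      ih (fun k hk => hu k (Finset.mem_insert_of_mem hk)) hx]
    rfl

theorem eqOn_zero_of_genDeriv_zero_const (hw : IsWeightSystem n U w) (hIcc : Icc a b ⊆ U)
    (hc : ∃ c, ∀ x ∈ Icc a b, genDeriv w 0 F x = c) (hx₀ : x₀ ∈ Icc a b)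
    (h₀ : genDeriv w 0 F x₀ = 0) : EqOn F 0 (Icc a b) := by
  obtain ⟨c, hc⟩ := hc
  intro x hx
  exact (genDeriv_zero_eq_zero_iff (hw.ne_zero 0 (Nat.zero_le n) x (hIcc hx))).mp
    ((hc x hx).trans ((hc x₀ hx₀).symm.trans h₀))

theorem eqOn_zero_of_deriv_genDeriv_zero (hw : IsWeightSystem (n + 1) U w) (hU : IsOpen U)
    (hIcc : Icc a b ⊆ U) (hF : ContDiffOn ℝ (n + 1 : ℕ) F U)
    (h : EqOn (deriv (genDeriv w 0 F)) 0 (Icc a b)) (hx₀ : x₀ ∈ Icc a b)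
    (h₀ : genDeriv w 0 F x₀ = 0) : EqOn F 0 (Icc a b) := by
  have hd : ∀ x ∈ Icc a b, DifferentiableAt ℝ (genDeriv w 0 F) x := fun x hx =>
    hw.differentiableAt_genDeriv hU hF n.succ_pos (hIcc hx)
  refine hw.eqOn_zero_of_genDeriv_zero_const hIcc ⟨_, constant_of_has_deriv_right_zero
    (fun x hx => (hd x hx).continuousAt.continuousWithinAt) fun x hx => ?_⟩ hx₀ h₀
  have hx' := Ico_subset_Icc_self hx
  simpa [h hx'] using (hd x hx').hasDerivAt.hasDerivWithinAt (s := Ici x)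

theorem eqOn_zero_of_genDeriv_eq_zero (hw : IsWeightSystem n U w) (hU : IsOpen U)
    (hIcc : Icc a b ⊆ U) (hF : ContDiffOn ℝ n F U) {p : ℝ} (hp : p ∈ Icc a b)
    (h₀ : ∀ j ≤ n, genDeriv w j F p = 0) (hc : ∃ c, ∀ x ∈ Icc a b, genDeriv w n F x = c) :
    EqOn F 0 (Icc a b) := by
  induction n generalizing w F with
  | zero => exact hw.eqOn_zero_of_genDeriv_zero_const hIcc hc hp (h₀ 0 le_rfl)
  | succ n ih =>
    refine hw.eqOn_zero_of_deriv_genDeriv_zero hU hIcc hF ?_ hp (h₀ 0 (Nat.zero_le _))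
    refine ih hw.shift (hw.contDiffOn_deriv_genDeriv_zero hU hF) (fun j hj => ?_) ?_
    · rw [genDeriv_shift]
      exact h₀ (j + 1) (by omega)
    · simpa only [genDeriv_shift] using hc

theorem eqOn_zero_of_vanishesOn (hw : IsWeightSystem n U w) (hU : IsOpen U)
    (hIcc : Icc a b ⊆ U) (hF : ContDiffOn ℝ n F U)
    (hc : ∃ c, ∀ x ∈ Icc a b, genDeriv w n F x = c) {Z : Multiset ℝ}
    (hZ : ∀ x ∈ Z, x ∈ Icc a b) (hcard : Multiset.card Z = n + 1) (hv : VanishesOn F Z) :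
    EqOn F 0 (Icc a b) := by
  induction n generalizing w F Z with
  | zero =>
    obtain ⟨x₀, hx₀⟩ := Multiset.card_pos_iff_exists_mem.mp (by omega : 0 < Multiset.card Z)
    refine hw.eqOn_zero_of_genDeriv_zero_const hIcc hc (hZ x₀ hx₀) ?_
    simp [genDeriv, hv.apply_eq_zero hx₀]
  | succ n ih =>
    have hvH : VanishesOn (genDeriv w 0 F) Z := fun x hx => by
      have hxU := hIcc (hZ x hx)
      have hw₀ : ContDiffAt ℝ (n + 1 : ℕ) (fun y => (w 0 y)⁻¹) x :=
        (hw.contDiff 0 (Nat.zero_le _)).contDiffAt.inv (hw.ne_zero 0 (Nat.zero_le _) x hxU)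
      simpa only [genDeriv, div_eq_mul_inv, Pi.mul_def] using
        (hv x hx).mul (hF.contDiffAt (hU.mem_nhds hxU)) hw₀ (hcard ▸ Multiset.count_le_card x Z)
    obtain ⟨Z', hZ', hcard', hv'⟩ := hvH.exists_deriv (fun x hx =>
      (hw.differentiableAt_genDeriv hU hF n.succ_pos (hIcc hx)).continuousAt.continuousWithinAt)
      hZ
    obtain ⟨x₀, hx₀⟩ := Multiset.card_pos_iff_exists_mem.mp (by omega : 0 < Multiset.card Z)
    refine hw.eqOn_zero_of_deriv_genDeriv_zero hU hIcc hF ?_ (hZ x₀ hx₀) (hvH.apply_eq_zero hx₀)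
    exact ih hw.shift (hw.contDiffOn_deriv_genDeriv_zero hU hF)
      (by simpa only [genDeriv_shift] using hc) hZ' (by omega) hv'

theorem exists_genDeriv_eq_ite (hw : IsWeightSystem n U w) (hU : IsOpen U) {p : ℝ}
    (hp : p ∈ U) {i : ℕ} (hi : i ≤ n) :
    ∃ u : ℝ → ℝ, ContDiff ℝ n u ∧ (∀ j ≤ n, genDeriv w j u p = if j = i then 1 else 0) ∧
      ∃ c, EqOn (genDeriv w n u) (fun _ => c) U := by
  induction i generalizing n w with
  | zero =>
    have hw₀ := hw.ne_zero 0 hi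
    exact ⟨w 0, hw.contDiff 0 hi, fun j _ => genDeriv_weight_zero hU hw₀ j hp, _,
      genDeriv_weight_zero hU hw₀ n⟩
  | succ i ih =>
    obtain ⟨n, rfl⟩ : ∃ k, n = k + 1 := ⟨n - 1, by omega⟩
    obtain ⟨u, hu, hup, c, huc⟩ := ih hw.shift (by omega)
    have hw₀ := hw.ne_zero 0 (Nat.zero_le _)
    refine ⟨fun x => w 0 x * ∫ t in p..x, u t, (hw.contDiff 0 (Nat.zero_le _)).mul
      (contDiff_integral hu p), fun j hj => ?_, c,
      (genDeriv_succ_mul_integral hU hw₀ hu.continuous p n).trans huc⟩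
    rcases j with _ | j
    · simp [genDeriv]
    · rw [genDeriv_succ_mul_integral hU hw₀ hu.continuous p j hp, hup j (by omega)]
      simp

end IsWeightSystem

structure IsNormalizedBasis (n : ℕ) (U : Set ℝ) (w : ℕ → ℝ → ℝ) (p : ℝ)
    (u : Fin (n + 1) → ℝ → ℝ) : Prop where
  contDiff : ∀ i, ContDiff ℝ n (u i)
  genDeriv_apply : ∀ i, ∀ j ≤ n, genDeriv w j (u i) p = if j = i then 1 else 0
  genDeriv_const : ∀ i, ∃ c, EqOn (genDeriv w n (u i)) (fun _ => c) U

theorem IsWeightSystem.exists_isNormalizedBasis {n : ℕ} {U : Set ℝ} {w : ℕ → ℝ → ℝ}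
    (hw : IsWeightSystem n U w) (hU : IsOpen U) {p : ℝ} (hp : p ∈ U) :
    ∃ u, IsNormalizedBasis n U w p u := by
  choose u hu hup huc using fun i : Fin (n + 1) =>
    hw.exists_genDeriv_eq_ite hU hp (Nat.lt_succ_iff.mp i.2)
  exact ⟨u, hu, hup, huc⟩

namespace IsNormalizedBasis

variable {n : ℕ} {U : Set ℝ} {w : ℕ → ℝ → ℝ} {p : ℝ} {u : Fin (n + 1) → ℝ → ℝ} {a b : ℝ}

theorem contDiff_sum (hu : IsNormalizedBasis n U w p u) (c : Fin (n + 1) → ℝ) :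
    ContDiff ℝ n (∑ i, c i • u i) := by
  simpa only [Finset.sum_fn, Pi.smul_apply] using
    ContDiff.sum fun i _ => (hu.contDiff i).const_smul (c i)

theorem genDeriv_sum_apply (hu : IsNormalizedBasis n U w p u) (hw : IsWeightSystem n U w)
    (hU : IsOpen U) (hp : p ∈ U) (c : Fin (n + 1) → ℝ) (j : Fin (n + 1)) :
    genDeriv w j (∑ i, c i • u i) p = c j := by
  rw [hw.genDeriv_sum hU _ c (fun i _ => (hu.contDiff i).contDiffOn) (Nat.lt_succ_iff.mp j.2) hp]
  simp [hu.genDeriv_apply _ _ (Nat.lt_succ_iff.mp j.2), Fin.val_eq_val]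

theorem exists_genDeriv_sum_const (hu : IsNormalizedBasis n U w p u)
    (hw : IsWeightSystem n U w) (hU : IsOpen U) (c : Fin (n + 1) → ℝ) :
    ∃ d, EqOn (genDeriv w n (∑ i, c i • u i)) (fun _ => d) U := by
  choose d hd using hu.genDeriv_const
  refine ⟨∑ i, c i * d i, fun x hx => ?_⟩
  rw [hw.genDeriv_sum hU _ c (fun i _ => (hu.contDiff i).contDiffOn) le_rfl hx]
  simp [hd _ hx]

theorem linearIndependent_domRestrict (hu : IsNormalizedBasis n U w p u)
    (hw : IsWeightSystem n U w) (hU : IsOpen U) (hIcc : Icc a b ⊆ U) (hp : p ∈ Ioo a b) :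
    LinearIndependent ℝ fun i => (Icc a b).domRestrict (u i) := by
  refine Fintype.linearIndependent_iff.mpr fun c hc j => ?_
  -- The generalized derivatives at the interior point `p` of a combination vanishing on
  -- `[a, b]` are zero, and they are its coefficients.
  have h : EqOn (∑ i, c i • u i) 0 (Ioo a b) := fun x hx => by
    simpa [Set.domRestrict_apply] using congrFun hc ⟨x, Ioo_subset_Icc_self hx⟩
  calc c j = genDeriv w j (∑ i, c i • u i) p :=
        (hu.genDeriv_sum_apply hw hU (hIcc (Ioo_subset_Icc_self hp)) c j).symm
    _ = 0 := by rw [h.genDeriv isOpen_Ioo j hp, genDeriv_zero_fun, Pi.zero_apply]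

theorem domRestrict_mem_span (hu : IsNormalizedBasis n U w p u) (hw : IsWeightSystem n U w)
    (hU : IsOpen U) (hIcc : Icc a b ⊆ U) (hp : p ∈ Icc a b) {F : ℝ → ℝ}
    (hF : ContDiffOn ℝ n F U) (hc : ∃ c, ∀ x ∈ Icc a b, genDeriv w n F x = c) :
    (Icc a b).domRestrict F ∈ Submodule.span ℝ (range fun i => (Icc a b).domRestrict (u i)) := by
  set γ : Fin (n + 1) → ℝ := fun j => genDeriv w j F p
  set G := F - ∑ i, γ i • u i
  have hS : ContDiffOn ℝ n (∑ i, γ i • u i) U := (hu.contDiff_sum γ).contDiffOn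
  have hG : ContDiffOn ℝ n G U := hF.sub hS
  have hFG : ∀ j ≤ n,
      EqOn (genDeriv w j F) (genDeriv w j G + genDeriv w j (∑ i, γ i • u i)) U :=
    fun j hj => by simpa [G] using hw.genDeriv_add hU hG hS hj
  have hG₀ : EqOn G 0 (Icc a b) := by
    refine hw.eqOn_zero_of_genDeriv_eq_zero hU hIcc hG hp (fun j hj => ?_) ?_
    · have h := hFG j hj (hIcc hp)
      rw [Pi.add_apply, hu.genDeriv_sum_apply hw hU (hIcc hp) γ ⟨j, by omega⟩] at h
      simpa [γ] using h
    · obtain ⟨c, hc⟩ := hc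
      obtain ⟨d, hd⟩ := hu.exists_genDeriv_sum_const hw hU γ
      refine ⟨c - d, fun x hx => ?_⟩
      have h := hFG n le_rfl (hIcc hx)
      rw [Pi.add_apply, hd (hIcc hx), hc x hx] at h
      linarith
  refine (Submodule.mem_span_range_iff_exists_fun ℝ).mpr ⟨γ, funext fun x => ?_⟩
  have h := hG₀ x.2
  simp only [G, Pi.sub_apply, Pi.zero_apply, sub_eq_zero] at h
  simp [Set.domRestrict_apply, h]

end IsNormalizedBasis

theorem IsWeightSystem.exists_submodule_finrank_eq {n : ℕ} {U : Set ℝ} {w : ℕ → ℝ → ℝ}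
    (hw : IsWeightSystem n U w) (hU : IsOpen U) {a b : ℝ} (hab : a < b) (hIcc : Icc a b ⊆ U) :
    ∃ V : Submodule ℝ (Icc a b → ℝ),
      (∀ g, g ∈ V ↔ ∃ F : ℝ → ℝ, ContDiff ℝ n F ∧
        (∃ c : ℝ, ∀ x ∈ Icc a b, genDeriv w n F x = c) ∧ g = (Icc a b).domRestrict F) ∧
      Module.finrank ℝ V = n + 1 := by
  have hp : (a + b) / 2 ∈ Ioo a b := ⟨by linarith, by linarith⟩
  obtain ⟨u, hu⟩ := hw.exists_isNormalizedBasis hU (hIcc (Ioo_subset_Icc_self hp))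
  refine ⟨Submodule.span ℝ (range fun i => (Icc a b).domRestrict (u i)),
    fun g => ⟨fun hg => ?_, ?_⟩, ?_⟩
  · obtain ⟨c, rfl⟩ := (Submodule.mem_span_range_iff_exists_fun ℝ).mp hg
    obtain ⟨d, hd⟩ := hu.exists_genDeriv_sum_const hw hU c
    exact ⟨∑ i, c i • u i, hu.contDiff_sum c, ⟨d, fun x hx => hd (hIcc hx)⟩,
      funext fun x => by simp [Set.domRestrict_apply]⟩
  · rintro ⟨F, hF, hc, rfl⟩
    exact hu.domRestrict_mem_span hw hU hIcc (Ioo_subset_Icc_self hp) hF.contDiffOn hc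
  · rw [finrank_span_eq_card (hu.linearIndependent_domRestrict hw hU hIcc hp), Fintype.card_fin]

theorem stmt_4 (m : ℕ) (hm : 1 ≤ m) (a b : ℝ) (hab : a < b)
    (w : ℕ → ℝ → ℝ)
    (hsm : ∀ j < m, ContDiff ℝ (m - 1 - j : ℕ) (w j))
    (hpos : ∀ j < m, ∀ x ∈ Set.Icc a b, 0 < w j x) :
    (∃ V : Submodule ℝ ((Set.Icc a b) → ℝ),
      (∀ g, g ∈ V ↔ ∃ F : ℝ → ℝ, ContDiff ℝ (m - 1 : ℕ) F ∧
        (∃ c : ℝ, ∀ x ∈ Set.Icc a b, genDeriv w (m - 1) F x = c) ∧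
        g = (Set.Icc a b).restrict F) ∧
      Module.finrank ℝ V = m) ∧
    ∀ F : ℝ → ℝ, ContDiff ℝ (m - 1 : ℕ) F →
      (∃ c : ℝ, ∀ x ∈ Set.Icc a b, genDeriv w (m - 1) F x = c) →
      (∃ x ∈ Set.Icc a b, F x ≠ 0) → AtMostZeros m (Set.Icc a b) F := by
  obtain ⟨n, rfl⟩ : ∃ n, m = n + 1 := ⟨m - 1, by omega⟩
  simp only [Nat.add_sub_cancel] at hsm ⊢
  -- `genDeriv` takes two-sided derivatives, also at `a` and `b`, so we work on an open
  -- neighbourhood of `[a, b]` on which all weights are positive.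
  set U := ⋂ j : Fin (n + 1), w j ⁻¹' Ioi 0
  have hU : IsOpen U := isOpen_iInter_of_finite fun j =>
    (hsm j j.2).continuous.isOpen_preimage _ isOpen_Ioi
  have hIcc : Icc a b ⊆ U := fun x hx => mem_iInter.mpr fun j => hpos j j.2 x hx
  have hw : IsWeightSystem n U w :=
    ⟨fun j hj => hsm j (by omega), fun j hj x hx => (mem_iInter.mp hx ⟨j, by omega⟩).ne'⟩
  refine ⟨hw.exists_submodule_finrank_eq hU hab hIcc, fun F hF hc ⟨x, hx, hFx⟩ => ?_⟩
  exact atMostZeros_of_forall_multiset fun Z hZ hcard hv =>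
    hFx (hw.eqOn_zero_of_vanishesOn hU hIcc hF.contDiffOn hc hZ hcard hv hx)
end

section
/- Let F be a continuous, piecewise C^1 function on [a,b] with breakpoints a = x₀ < x₁ < ... < x_{k+1} = b, such that on each (x_i, x_{i+1}) the one-sided derivatives satisfy F'(x_i⁺) = ρ_i F'(x_i⁻) with ρ_i > 0 at each interior breakpoint. If F(c) = F(d) = 0 for some a ≤ c < d ≤ b, then there exists ξ ∈ (c,d) with F'(ξ⁻) = 0 or F'(ξ⁺) = 0 or F'(ξ) changes sign at ξ. -/
/-!
At an interior extremum of `F` on `[c, d]`, which exists by the extreme value theorem since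
`F c = F d`, the one-sided form of Fermat's theorem makes the left and right derivatives of
opposite weak signs, so their product is nonpositive.
-/

open Set

section OneSidedFermat

variable {f : ℝ → ℝ} {a l r : ℝ}

theorem IsLocalMax.hasDerivWithinAt_Iic_nonneg (h : IsLocalMax f a)
    (hl : HasDerivWithinAt f l (Iic a) a) : 0 ≤ l := by
  have hdir : (-1 : ℝ) ∈ posTangentConeAt (Iic a) a :=
    mem_posTangentConeAt_of_segment_subset (by
      rw [segment_symm, segment_eq_Icc (by linarith)]
      exact Icc_subset_Iic_self)
  simpa using (h.on (Iic a)).hasFDerivWithinAt_nonpos hl.hasFDerivWithinAt hdir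

theorem IsLocalMax.hasDerivWithinAt_Ici_nonpos (h : IsLocalMax f a)
    (hr : HasDerivWithinAt f r (Ici a) a) : r ≤ 0 := by
  have hdir : (1 : ℝ) ∈ posTangentConeAt (Ici a) a :=
    mem_posTangentConeAt_of_segment_subset (by
      rw [segment_eq_Icc (by linarith)]
      exact Icc_subset_Ici_self)
  simpa using (h.on (Ici a)).hasFDerivWithinAt_nonpos hr.hasFDerivWithinAt hdir

theorem IsLocalExtr.mul_nonpos_of_hasDerivWithinAt_Iic_Ici (h : IsLocalExtr f a)
    (hl : HasDerivWithinAt f l (Iic a) a) (hr : HasDerivWithinAt f r (Ici a) a) :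
    l * r ≤ 0 := by
  rcases h with (hmin : IsLocalMin f a) | (hmax : IsLocalMax f a)
  · have := mul_nonpos_of_nonneg_of_nonpos (hmin.neg.hasDerivWithinAt_Iic_nonneg hl.neg)
      (hmin.neg.hasDerivWithinAt_Ici_nonpos hr.neg)
    rwa [neg_mul_neg] at this
  · exact mul_nonpos_of_nonneg_of_nonpos (hmax.hasDerivWithinAt_Iic_nonneg hl)
      (hmax.hasDerivWithinAt_Ici_nonpos hr)

end OneSidedFermat

theorem exists_mem_Ioo_derivWithin_Iic_mul_derivWithin_Ici_nonpos {f : ℝ → ℝ} {c d : ℝ}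
    (hcd : c < d) (hfc : ContinuousOn f (Icc c d)) (hfcd : f c = f d)
    (hl : ∀ t ∈ Ioo c d, DifferentiableWithinAt ℝ f (Iic t) t)
    (hr : ∀ t ∈ Ioo c d, DifferentiableWithinAt ℝ f (Ici t) t) :
    ∃ ξ ∈ Ioo c d, derivWithin f (Iic ξ) ξ * derivWithin f (Ici ξ) ξ ≤ 0 := by
  obtain ⟨ξ, hξ, hextr⟩ := exists_isLocalExtr_Ioo hcd hfc hfcd
  exact ⟨ξ, hξ, hextr.mul_nonpos_of_hasDerivWithinAt_Iic_Ici
    (hl ξ hξ).hasDerivWithinAt (hr ξ hξ).hasDerivWithinAt⟩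

section Piecewise

variable {F : ℝ → ℝ} {x : ℕ → ℝ} {k : ℕ}

theorem differentiableWithinAt_Iic_of_differentiableOn_Icc
    (hF : ∀ i ≤ k, DifferentiableOn ℝ F (Icc (x i) (x (i + 1))))
    {t : ℝ} (ht : t ∈ Ioc (x 0) (x (k + 1))) : DifferentiableWithinAt ℝ F (Iic t) t := by
  obtain ⟨i, hi, hti⟩ := mem_iUnion₂.1 (Ioc_subset_biUnion_Ioc (k + 1) x ht)
  exact (hF i (Nat.lt_succ_iff.1 (Finset.mem_range.1 hi)) t (Ioc_subset_Icc_self hti))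
    |>.mono_of_mem_nhdsWithin (Icc_mem_nhdsLE_of_mem hti)

theorem differentiableWithinAt_Ici_of_differentiableOn_Icc
    (hF : ∀ i ≤ k, DifferentiableOn ℝ F (Icc (x i) (x (i + 1))))
    {t : ℝ} (ht : t ∈ Ico (x 0) (x (k + 1))) : DifferentiableWithinAt ℝ F (Ici t) t := by
  obtain ⟨i, hi, hti⟩ := mem_iUnion₂.1 (Ico_subset_biUnion_Ico (k + 1) x ht)
  exact (hF i (Nat.lt_succ_iff.1 (Finset.mem_range.1 hi)) t (Ico_subset_Icc_self hti))
    |>.mono_of_mem_nhdsWithin (Icc_mem_nhdsGE_of_mem hti)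

end Piecewise

theorem stmt_14_general (a b : ℝ) (k : ℕ)
    (x : ℕ → ℝ) (hx0 : x 0 = a) (hxk : x (k + 1) = b)
    (F : ℝ → ℝ)
    (hFcont : ContinuousOn F (Set.Icc a b))
    (hFC1 : ∀ i ≤ k, ContDiffOn ℝ 1 F (Set.Icc (x i) (x (i + 1))))
    (c d : ℝ) (hc : a ≤ c) (hcd : c < d) (hd : d ≤ b)
    (hFc : F c = 0) (hFd : F d = 0) :
    ∃ ξ ∈ Set.Ioo c d,
      derivWithin F (Set.Iic ξ) ξ = 0 ∨ derivWithin F (Set.Ici ξ) ξ = 0 ∨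
      derivWithin F (Set.Iic ξ) ξ * derivWithin F (Set.Ici ξ) ξ < 0 := by
  have hdiff i hi := (hFC1 i hi).differentiableOn one_ne_zero
  have hsub : Ioo c d ⊆ Ioo (x 0) (x (k + 1)) := by
    rw [hx0, hxk]
    exact Ioo_subset_Ioo hc hd
  obtain ⟨ξ, hξ, hprod⟩ := exists_mem_Ioo_derivWithin_Iic_mul_derivWithin_Ici_nonpos hcd
    (hFcont.mono (Icc_subset_Icc hc hd)) (hFc.trans hFd.symm)
    (fun t ht ↦ differentiableWithinAt_Iic_of_differentiableOn_Icc hdiff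
      (Ioo_subset_Ioc_self (hsub ht)))
    (fun t ht ↦ differentiableWithinAt_Ici_of_differentiableOn_Icc hdiff
      (Ioo_subset_Ico_self (hsub ht)))
  refine ⟨ξ, hξ, ?_⟩
  rcases hprod.lt_or_eq with hneg | hzero
  · exact Or.inr (Or.inr hneg)
  · rcases mul_eq_zero.1 hzero with hleft | hright
    · exact Or.inl hleft
    · exact Or.inr (Or.inl hright)

theorem stmt_14 (a b : ℝ) (hab : a < b) (k : ℕ)
    (x : ℕ → ℝ) (hx0 : x 0 = a) (hxk : x (k + 1) = b)
    (hxmono : ∀ i ≤ k, x i < x (i + 1))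
    (F : ℝ → ℝ)
    (hFcont : ContinuousOn F (Set.Icc a b))
    (hFC1 : ∀ i ≤ k, ContDiffOn ℝ 1 F (Set.Icc (x i) (x (i + 1))))
    (ρ : ℕ → ℝ) (hρ : ∀ i, 1 ≤ i → i ≤ k → 0 < ρ i)
    (hconn : ∀ i, 1 ≤ i → i ≤ k →
      derivWithin F (Set.Ici (x i)) (x i) = ρ i * derivWithin F (Set.Iic (x i)) (x i))
    (c d : ℝ) (hc : a ≤ c) (hcd : c < d) (hd : d ≤ b)
    (hFc : F c = 0) (hFd : F d = 0) :
    ∃ ξ ∈ Set.Ioo c d,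
      derivWithin F (Set.Iic ξ) ξ = 0 ∨ derivWithin F (Set.Ici ξ) ξ = 0 ∨
      derivWithin F (Set.Iic ξ) ξ * derivWithin F (Set.Ici ξ) ξ < 0 :=
  stmt_14_general a b k x hx0 hxk F hFcont hFC1 c d hc hcd hd hFc hFd
end

section
/- Let S be an m-dimensional space of C^{m-1} functions on [a,b] containing constants, such that every nonzero F ∈ S has at most m-1 zeros in [a,b] counting multiplicities up to m. Then for each ℓ = 2,...,m there exists a unique f_ℓ ∈ S with D^r f_ℓ(a) = 0 for r = 0,...,ℓ-2, f_ℓ(b) = 1, and D^r f_ℓ(b) = 0 for r = 1,...,m-ℓ. -/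
/-! Both point conditions together form a two-point Hermite problem with `ℓ - 1` data at `a` and
`m - ℓ + 1` data at `b`. Its data map `S → ℝ^(ℓ-1) × ℝ^(m-ℓ+1)` is linear between spaces of the
same dimension `m`, and a function in its kernel vanishes to total order `m` on `{a, b}`, hence is
zero by the zero-counting property. So the data map is bijective and `f_ℓ` is the unique
preimage of the data `(0, e₀)`. -/

section Jet

variable (S : Submodule ℝ (ℝ → ℝ)) {n : ℕ} (hS : ∀ F ∈ S, ContDiff ℝ n F)

noncomputable def jetAt (x : ℝ) (p : ℕ) (hp : p ≤ n + 1) : S →ₗ[ℝ] Fin p → ℝ where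
  toFun F i := iteratedDeriv i F x
  map_add' F G := funext fun i =>
    have hi : ((i : ℕ) : WithTop ℕ∞) ≤ n := by exact_mod_cast Nat.le_of_lt_succ (i.2.trans_le hp)
    iteratedDeriv_add ((hS F F.2).of_le hi).contDiffAt ((hS G G.2).of_le hi).contDiffAt
  map_smul' c F := funext fun _ => iteratedDeriv_const_smul_field c (F : ℝ → ℝ)

theorem jetAt_apply (x : ℝ) (p : ℕ) (hp : p ≤ n + 1) (F : S) (i : Fin p) :
    jetAt S hS x p hp F i = iteratedDeriv i F x :=
  rfl

theorem jetAt_eq_zero_iff (x : ℝ) (p : ℕ) (hp : p ≤ n + 1) (F : S) :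
    jetAt S hS x p hp F = 0 ↔ VanishesTo F x p := by
  simp only [funext_iff, jetAt_apply, Pi.zero_apply, Fin.forall_iff, VanishesTo]

end Jet

theorem AtMostZeros.not_vanishesTo_two_points {m : ℕ} {I : Set ℝ} {F : ℝ → ℝ}
    (hF : AtMostZeros m I F) {a b : ℝ} (ha : a ∈ I) (hb : b ∈ I) (hab : a ≠ b) {p q : ℕ}
    (hp : 1 ≤ p) (hq : 1 ≤ q) (hpq : p + q = m) :
    ¬ (VanishesTo F a p ∧ VanishesTo F b q) := by
  rintro ⟨hFa, hFb⟩
  refine hF 2 ![a, b] ![p, q] ?_ ?_ ?_ (by simpa using hpq) ?_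
  · intro i j hij
    fin_cases i <;> fin_cases j <;> simp_all [eq_comm]
  · intro j; fin_cases j <;> assumption
  · intro j; fin_cases j <;> simp <;> omega
  · intro j; fin_cases j <;> assumption

theorem existsUnique_hermite_two_point (S : Submodule ℝ (ℝ → ℝ)) {m p q : ℕ}
    (hdim : Module.finrank ℝ S = m) (hsm : ∀ F ∈ S, ContDiff ℝ (m - 1 : ℕ) F) {I : Set ℝ}
    (hEC : ∀ F ∈ S, F ≠ 0 → AtMostZeros m I F) {a b : ℝ} (ha : a ∈ I) (hb : b ∈ I)
    (hab : a ≠ b) (hp : 1 ≤ p) (hq : 1 ≤ q) (hpq : p + q = m) (α β : ℕ → ℝ) :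
    ∃! F : ℝ → ℝ, F ∈ S ∧ (∀ r < p, iteratedDeriv r F a = α r) ∧
      ∀ r < q, iteratedDeriv r F b = β r := by
  let T := (jetAt S hsm a p (by omega)).prod (jetAt S hsm b q (by omega))
  have : FiniteDimensional ℝ S := Module.finite_of_finrank_pos (by omega)
  have hinj : Function.Injective T := by
    refine LinearMap.ker_eq_bot.mp (LinearMap.ker_eq_bot'.mpr fun F hF => ?_)
    obtain ⟨hFa, hFb⟩ := Prod.ext_iff.mp hF
    by_contra hF0
    exact (hEC F F.2 fun h => hF0 (Subtype.ext h)).not_vanishesTo_two_points ha hb hab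
      hp hq hpq ⟨(jetAt_eq_zero_iff _ _ _ _ _ _).mp hFa, (jetAt_eq_zero_iff _ _ _ _ _ _).mp hFb⟩
  have hbij : Function.Bijective T :=
    ⟨hinj, (LinearMap.injective_iff_surjective_of_finrank_eq_finrank
      (by simp [hdim, hpq])).mp hinj⟩
  have hT (F : S) : T F = (fun i : Fin p => α i, fun j : Fin q => β j) ↔
      (∀ r < p, iteratedDeriv r F a = α r) ∧ ∀ r < q, iteratedDeriv r F b = β r := by
    simp only [Prod.ext_iff, funext_iff, Fin.forall_iff]
    rfl
  obtain ⟨F, hF, hFuniq⟩ := hbij.existsUnique (fun i : Fin p => α i, fun j : Fin q => β j)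
  refine ⟨F, ⟨F.2, (hT F).mp hF⟩, fun G ⟨hGS, hG⟩ => ?_⟩
  exact congrArg Subtype.val (hFuniq ⟨G, hGS⟩ ((hT ⟨G, hGS⟩).mpr hG))

theorem forall_lt_succ_eq_single_zero_iff (g : ℕ → ℝ) (k : ℕ) :
    (∀ r < k + 1, g r = (Pi.single 0 1 : ℕ → ℝ) r) ↔ g 0 = 1 ∧ ∀ r, 1 ≤ r → r ≤ k → g r = 0 := by
  constructor
  · intro h
    refine ⟨by simpa using h 0 (by omega), fun r hr1 hr2 => ?_⟩
    simpa [Pi.single_apply, Nat.one_le_iff_ne_zero.mp hr1] using h r (by omega)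
  · rintro ⟨h0, h⟩ r hr
    rcases Nat.eq_zero_or_pos r with rfl | hr0
    · simpa using h0
    · simpa [Pi.single_apply, hr0.ne'] using h r hr0 (by omega)

theorem stmt_15_general (m : ℕ) (a b : ℝ) (hab : a < b)
    (S : Submodule ℝ (ℝ → ℝ))
    (hdim : Module.finrank ℝ S = m)
    (hsm : ∀ F ∈ S, ContDiff ℝ (m - 1 : ℕ) F)
    (hEC : ∀ F ∈ S, F ≠ 0 → AtMostZeros m (Set.Icc a b) F) :
    ∀ ℓ, 2 ≤ ℓ → ℓ ≤ m →
      ∃! f : ℝ → ℝ, f ∈ S ∧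
        (∀ r ≤ ℓ - 2, iteratedDeriv r f a = 0) ∧
        f b = 1 ∧
        (∀ r, 1 ≤ r → r ≤ m - ℓ → iteratedDeriv r f b = 0) := by
  intro ℓ hℓ hℓm
  refine (existsUnique_congr fun f => ?_).mp <|
    existsUnique_hermite_two_point S hdim hsm hEC (Set.left_mem_Icc.mpr hab.le)
      (Set.right_mem_Icc.mpr hab.le) hab.ne (p := ℓ - 1) (q := m - ℓ + 1) (by omega) (by omega)
      (by omega) 0 (Pi.single 0 1)
  refine and_congr_right fun _ => and_congr ?_ ?_
  · exact forall_congr' fun r => by simp only [Pi.zero_apply]; exact imp_congr_left (by omega)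
  · simpa only [iteratedDeriv_zero] using
      forall_lt_succ_eq_single_zero_iff (fun r => iteratedDeriv r f b) (m - ℓ)

theorem stmt_15 (m : ℕ) (hm : 2 ≤ m) (a b : ℝ) (hab : a < b)
    (S : Submodule ℝ (ℝ → ℝ))
    (hdim : Module.finrank ℝ S = m)
    (hsm : ∀ F ∈ S, ContDiff ℝ (m - 1 : ℕ) F)
    (h1 : (fun _ => (1 : ℝ)) ∈ S)
    (hEC : ∀ F ∈ S, F ≠ 0 → AtMostZeros m (Set.Icc a b) F) :
    ∀ ℓ, 2 ≤ ℓ → ℓ ≤ m →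
      ∃! f : ℝ → ℝ, f ∈ S ∧
        (∀ r ≤ ℓ - 2, iteratedDeriv r f a = 0) ∧
        f b = 1 ∧
        (∀ r, 1 ≤ r → r ≤ m - ℓ → iteratedDeriv r f b = 0) :=
  stmt_15_general m a b hab S hdim hsm hEC
end

section
/- Let S be an m-dimensional space of C^{m-1} functions on [a,b] containing constants such that DS is an (m-1)-dimensional EC-space on [a,b], and let f₂,...,f_m be the transition functions with f₁ ≡ 1, f_{m+1} ≡ 0. Define w₁ = ∑_{ℓ=2}^m f_ℓ'. Then w₁ > 0 on all of [a,b] (including one-sided at the endpoints a and b). -/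
open Set

lemma vanishesTo_zero (F : ℝ → ℝ) (x : ℝ) : VanishesTo F x 0 :=
  fun _ hr => absurd hr (Nat.not_lt_zero _)

lemma vanishesTo_one_iff {F : ℝ → ℝ} {x : ℝ} : VanishesTo F x 1 ↔ F x = 0 := by
  simp [VanishesTo]

lemma vanishesTo_deriv_iff {F : ℝ → ℝ} {x : ℝ} {μ : ℕ} :
    VanishesTo (deriv F) x μ ↔ ∀ r, 1 ≤ r → r ≤ μ → iteratedDeriv r F x = 0 := by
  refine ⟨fun h r hr1 hrμ => ?_, fun h r hr => ?_⟩
  · obtain ⟨r, rfl⟩ := Nat.exists_eq_add_of_le' hr1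
    rw [iteratedDeriv_succ']
    exact h r (by omega)
  · rw [← iteratedDeriv_succ']
    exact h (r + 1) (by omega) hr

lemma not_atMostZeros_of_vanishesTo {m : ℕ} {I : Set ℝ} {F : ℝ → ℝ} (μ : ℝ →₀ ℕ)
    (hI : ↑μ.support ⊆ I) (hdeg : μ.degree = m) (hF : ∀ x, VanishesTo F x (μ x)) :
    ¬ AtMostZeros m I F := by
  intro H
  let τ : Fin μ.support.card → ℝ := fun j => μ.support.equivFin.symm j
  refine H _ τ (fun j => μ (τ j)) ?_ (fun j => hI (μ.support.equivFin.symm j).2)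
    (fun j => ⟨?_, hdeg ▸ Finsupp.le_degree _ _⟩) ?_ (fun j => hF _)
  · exact Subtype.val_injective.comp μ.support.equivFin.symm.injective
  · exact Nat.one_le_iff_ne_zero.mpr (Finsupp.mem_support_iff.mp (μ.support.equivFin.symm j).2)
  · rw [← hdeg, Finsupp.degree_apply, ← Finset.sum_coe_sort μ.support]
    exact Equiv.sum_comp μ.support.equivFin.symm (fun x => μ x)

/-- The zeros `a` (order `α`), `x` (order `1`) and `b` (order `β`) add up to `n`. -/
lemma AtMostZeros.apply_ne_zero {n α β : ℕ} {a b x : ℝ} {G : ℝ → ℝ} (hab : a < b)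
    (hG : AtMostZeros n (Icc a b) G) (hn : α + β + 1 = n)
    (ha : VanishesTo G a α) (hb : VanishesTo G b β) (hx : x ∈ Icc a b)
    (hxa : x = a → α = 0) (hxb : x = b → β = 0) : G x ≠ 0 := by
  intro hx0
  refine not_atMostZeros_of_vanishesTo
    (Finsupp.single a α + Finsupp.single b β + Finsupp.single x 1) ?_ ?_ ?_ hG
  · intro y hy
    rw [Finset.mem_coe, Finsupp.mem_support_iff] at hy
    by_contra hyI
    have hne : ∀ z ∈ Icc a b, z ≠ y := fun z hz h => hyI (h ▸ hz)
    simp [hne a (left_mem_Icc.2 hab.le), hne b (right_mem_Icc.2 hab.le),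
      hne x hx] at hy
  · simp only [map_add, Finsupp.degree_single, hn]
  · intro y
    simp only [Finsupp.add_apply, Finsupp.single_apply]
    split_ifs with hay hby hxy hxy hxy <;> subst_vars
    · exact (lt_irrefl _ hab).elim
    · exact (lt_irrefl _ hab).elim
    · simpa [hxa rfl, vanishesTo_one_iff] using hx0
    · simpa using ha
    · simpa [hxb rfl, vanishesTo_one_iff] using hx0
    · simpa using hb
    · simpa [vanishesTo_one_iff] using hx0
    · exact vanishesTo_zero G y

lemma IsPreconnected.pos_of_ne_zero {X : Type*} [TopologicalSpace X] {s : Set X}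
    (hs : IsPreconnected s) {G : X → ℝ} (hG : ContinuousOn G s) (hne : ∀ x ∈ s, G x ≠ 0)
    {c : X} (hc : c ∈ s) (hGc : 0 < G c) : ∀ x ∈ s, 0 < G x := by
  intro x hx
  by_contra! hle
  obtain ⟨y, hy, hy0⟩ := hs.intermediate_value hx hc hG ⟨hle, hGc.le⟩
  exact hne y hy hy0

lemma deriv_nonneg_and_pos_of_atMostZeros {n α β : ℕ} {a b : ℝ} {F : ℝ → ℝ} (hab : a < b)
    (hF : ContDiff ℝ 1 F) (hFab : F a < F b)
    (hZ : (∃ x ∈ Icc a b, deriv F x ≠ 0) → AtMostZeros n (Icc a b) (deriv F))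
    (hn : α + β + 1 = n) (ha : VanishesTo (deriv F) a α) (hb : VanishesTo (deriv F) b β) :
    ∀ x ∈ Icc a b,
      0 ≤ deriv F x ∧ ((x = a → α = 0) → (x = b → β = 0) → 0 < deriv F x) := by
  have hcont : Continuous (deriv F) := hF.continuous_deriv le_rfl
  have hdiff : Differentiable ℝ F := hF.differentiable one_ne_zero
  obtain ⟨c, hc, hslope⟩ := exists_deriv_eq_slope F hab hdiff.continuous.continuousOn
    fun x _ => (hdiff x).differentiableWithinAt
  have hc_pos : 0 < deriv F c := by
    rw [hslope]
    exact div_pos (sub_pos.2 hFab) (sub_pos.2 hab)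
  have hne : ∀ x ∈ Icc a b, (x = a → α = 0) → (x = b → β = 0) → deriv F x ≠ 0 :=
    fun x hx => (hZ ⟨c, Ioo_subset_Icc_self hc, hc_pos.ne'⟩).apply_ne_zero hab hn ha hb hx
  have hpos : ∀ x ∈ Ioo a b, 0 < deriv F x :=
    isPreconnected_Ioo.pos_of_ne_zero hcont.continuousOn
      (fun x hx => hne x (Ioo_subset_Icc_self hx) (fun h => (hx.1.ne' h).elim)
        (fun h => (hx.2.ne h).elim)) hc hc_pos
  have hnonneg : ∀ x ∈ Icc a b, 0 ≤ deriv F x := by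
    rw [← closure_Ioo hab.ne]
    exact closure_minimal (fun x hx => (hpos x hx).le) (isClosed_le continuous_const hcont)
  exact fun x hx => ⟨hnonneg x hx, fun hxa hxb => (hnonneg x hx).lt_of_ne' (hne x hx hxa hxb)⟩

theorem stmt_16_general (m : ℕ) (hm : 2 ≤ m) (a b : ℝ) (hab : a < b)
    (S : Submodule ℝ (ℝ → ℝ))
    (hsm : ∀ F ∈ S, ContDiff ℝ (m - 1 : ℕ) F)
    (hDSEC : ∀ F ∈ S, (∃ x ∈ Set.Icc a b, deriv F x ≠ 0) →
      AtMostZeros (m - 1) (Set.Icc a b) (deriv F))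
    (f : ℕ → ℝ → ℝ)
    (hfS : ∀ ℓ, 1 ≤ ℓ → ℓ ≤ m → f ℓ ∈ S)
    (ha0 : ∀ ℓ, 2 ≤ ℓ → ℓ ≤ m → ∀ r ≤ ℓ - 2, iteratedDeriv r (f ℓ) a = 0)
    (hb1 : ∀ ℓ, 2 ≤ ℓ → ℓ ≤ m → f ℓ b = 1)
    (hb0 : ∀ ℓ, 2 ≤ ℓ → ℓ ≤ m → ∀ r, 1 ≤ r → r ≤ m - ℓ → iteratedDeriv r (f ℓ) b = 0) :
    ∀ x ∈ Set.Icc a b, 0 < ∑ ℓ ∈ Finset.Icc 2 m, deriv (f ℓ) x := by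
  have hderiv : ∀ ℓ ∈ Finset.Icc 2 m, ∀ x ∈ Icc a b, 0 ≤ deriv (f ℓ) x ∧
      ((x = a → ℓ = 2) → (x = b → ℓ = m) → 0 < deriv (f ℓ) x) := by
    intro ℓ hℓ x hx
    obtain ⟨hℓ2, hℓm⟩ := Finset.mem_Icc.1 hℓ
    have hfℓ : f ℓ ∈ S := hfS ℓ (by omega) hℓm
    have hfa : f ℓ a = 0 := by simpa using ha0 ℓ hℓ2 hℓm 0 (Nat.zero_le _)
    have key := deriv_nonneg_and_pos_of_atMostZeros (α := ℓ - 2) (β := m - ℓ) hab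
      ((hsm _ hfℓ).of_le (by exact_mod_cast (by omega : 1 ≤ m - 1)))
      (by rw [hfa, hb1 ℓ hℓ2 hℓm]; exact one_pos) (hDSEC _ hfℓ) (by omega)
      (vanishesTo_deriv_iff.2 fun r _ hr => ha0 ℓ hℓ2 hℓm r (by omega))
      (vanishesTo_deriv_iff.2 (hb0 ℓ hℓ2 hℓm)) x hx
    exact ⟨key.1, fun hxa hxb =>
      key.2 (fun h => by rw [hxa h]) (fun h => by rw [hxb h, Nat.sub_self])⟩
  intro x hx
  refine Finset.sum_pos' (fun ℓ hℓ => (hderiv ℓ hℓ x hx).1) ?_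
  have h2 : 2 ∈ Finset.Icc 2 m := Finset.mem_Icc.2 ⟨le_rfl, hm⟩
  have hm' : m ∈ Finset.Icc 2 m := Finset.mem_Icc.2 ⟨hm, le_rfl⟩
  rcases eq_or_ne x b with rfl | hxb
  · exact ⟨m, hm', (hderiv m hm' x hx).2 (fun h => (hab.ne h.symm).elim) fun _ => rfl⟩
  · exact ⟨2, h2, (hderiv 2 h2 x hx).2 (fun _ => rfl) fun h => (hxb h).elim⟩

theorem stmt_16 (m : ℕ) (hm : 2 ≤ m) (a b : ℝ) (hab : a < b)
    (S : Submodule ℝ (ℝ → ℝ))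
    (hdim : Module.finrank ℝ S = m)
    (hsm : ∀ F ∈ S, ContDiff ℝ (m - 1 : ℕ) F)
    (h1 : (fun _ => (1 : ℝ)) ∈ S)
    (hDSdim : Module.finrank ℝ ↥(Submodule.span ℝ (deriv '' (S : Set (ℝ → ℝ)))) = m - 1)
    (hDSEC : ∀ F ∈ S, (∃ x ∈ Set.Icc a b, deriv F x ≠ 0) →
      AtMostZeros (m - 1) (Set.Icc a b) (deriv F))
    (f : ℕ → ℝ → ℝ)
    (hf1 : f 1 = fun _ => 1)
    (hftop : f (m + 1) = fun _ => 0)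
    (hfS : ∀ ℓ, 1 ≤ ℓ → ℓ ≤ m → f ℓ ∈ S)
    (ha0 : ∀ ℓ, 2 ≤ ℓ → ℓ ≤ m → ∀ r ≤ ℓ - 2, iteratedDeriv r (f ℓ) a = 0)
    (hb1 : ∀ ℓ, 2 ≤ ℓ → ℓ ≤ m → f ℓ b = 1)
    (hb0 : ∀ ℓ, 2 ≤ ℓ → ℓ ≤ m → ∀ r, 1 ≤ r → r ≤ m - ℓ → iteratedDeriv r (f ℓ) b = 0) :
    ∀ x ∈ Set.Icc a b, 0 < ∑ ℓ ∈ Finset.Icc 2 m, deriv (f ℓ) x :=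
  stmt_16_general m hm a b hab S hsm hDSEC f hfS ha0 hb1 hb0
end
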